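/- For every y ∈ O_E[[π]] and every integer i ≥ 0, q^i divides φ(y) in O_E[[π]] if and only if π^i divides y in O_E[[π]]. -/

import Mathlib

open PowerSeries Filter Finset

noncomputable section

variable (p : ℕ) [Fact p.Prime]

/-- Substitution of a power series `g` (with zero constant coefficient in all our uses)
into a power series `f`: the coefficient of degree `j` of `f(g)` only involves the
monomials of `f` of degree `≤ j`. -/
def psSubst {A : Type*} [CommRing A] (g f : PowerSeries A) : PowerSeries A :=
  PowerSeries.mk fun j => ∑ i ∈ Finset.range (j + 1),
    PowerSeries.coeff i f * PowerSeries.coeff j (g ^ i)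

/-- The endomorphism `φ` of `A[[π]]`, substituting `(1+π)^p - 1` for `π`. -/
def phiA (A : Type*) [CommRing A] : PowerSeries A → PowerSeries A :=
  psSubst ((1 + PowerSeries.X) ^ p - 1)

/-- The binomial coefficient `binom(c, n)` for `c ∈ ℤ_p`, computed in `ℚ_p`. -/
def binomC (c : ℤ_[p]) (n : ℕ) : ℚ_[p] :=
  Polynomial.eval (c : ℚ_[p]) (descPochhammer ℚ_[p] n) / (n.factorial : ℚ_[p])

/-- The binomial power series `(1+π)^c = ∑_{n≥0} binom(c,n) π^n` for `c ∈ ℤ_p`. -/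
def onePlusPiPow (c : ℤ_[p]) : PowerSeries ℚ_[p] := PowerSeries.mk (binomC p c)

/-- The endomorphism `γ_c` of `ℚ_p[[π]]`, substituting `(1+π)^c - 1` for `π`. -/
def gammaQ (c : ℤ_[p]) : PowerSeries ℚ_[p] → PowerSeries ℚ_[p] :=
  psSubst (onePlusPiPow p c - 1)

/-- The partial products `∏_{n=0}^{N} φ^{2n+1}(q)/p` (whose limit is `λ₊`). -/
def partialPlus (q : PowerSeries ℚ_[p]) (N : ℕ) : PowerSeries ℚ_[p] :=
  ∏ n ∈ Finset.range (N + 1), (p : ℚ_[p])⁻¹ • (phiA p ℚ_[p])^[2 * n + 1] q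

/-- The partial products `∏_{n=0}^{N} φ^{2n}(q)/p` (whose limit is `λ₋`). -/
def partialMinus (q : PowerSeries ℚ_[p]) (N : ℕ) : PowerSeries ℚ_[p] :=
  ∏ n ∈ Finset.range (N + 1), (p : ℚ_[p])⁻¹ • (phiA p ℚ_[p])^[2 * n] q

/-- Convergence in `ℚ_p[[π]]` for the topology of coefficientwise convergence. -/
def CoeffTendsto (F : ℕ → PowerSeries ℚ_[p]) (L : PowerSeries ℚ_[p]) : Prop :=
  ∀ d : ℕ, Filter.Tendsto (fun N => PowerSeries.coeff d (F N))
    Filter.atTop (nhds (PowerSeries.coeff d L))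

/-- A power series with `ℚ_p` coefficients has all its coefficients in `ℤ_p`. -/
def IntSeries (f : PowerSeries ℚ_[p]) : Prop := ∀ n, ‖PowerSeries.coeff n f‖ ≤ 1

/-- Membership in the ring `R` of series `∑ a_i π^i` with `v_p(a_i) + i/(p-1) ≥ 0`,
expressed via norms: `‖a_i‖ ≤ p^{i/(p-1)}`. -/
def memR (f : PowerSeries ℚ_[p]) : Prop :=
  ∀ i : ℕ, ‖PowerSeries.coeff i f‖ ≤ (p : ℝ) ^ ((i : ℝ) / ((p : ℝ) - 1))

/-- The series `p^m λ₋^{k-1} λ₊^{-(k-1)}`, where `m = ⌊(k-2)/(p-1)⌋`. -/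
def zFull (k : ℕ) (lamPlus lamMinus : PowerSeries ℚ_[p]) : PowerSeries ℚ_[p] :=
  (p : PowerSeries ℚ_[p]) ^ ((k - 2) / (p - 1)) * lamMinus ^ (k - 1) * lamPlus⁻¹ ^ (k - 1)

/-- The truncation `z = z_0 + z_1 π + ⋯ + z_{k-2} π^{k-2}` of `p^m λ₋^{k-1} λ₊^{-(k-1)}`. -/
def zSeries (k : ℕ) (lamPlus lamMinus : PowerSeries ℚ_[p]) : PowerSeries ℚ_[p] :=
  PowerSeries.mk fun i =>
    if i ≤ k - 2 then PowerSeries.coeff i (zFull p k lamPlus lamMinus) else 0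

/-- The two-variable power series ring `ℚ_p[[π, X]]`, realized as `(ℚ_p[[π]])[[X]]`:
the inner variable is `π` and the outer variable is `X`. -/
abbrev PS2 := PowerSeries (PowerSeries ℚ_[p])

/-- `φ` extended to `ℚ_p[[π, X]]`, acting as before on `π` and trivially on `X`. -/
def phi2 : PS2 p → PS2 p := fun F =>
  PowerSeries.mk fun n => phiA p ℚ_[p] (PowerSeries.coeff n F)

/-- `γ_c` extended to `ℚ_p[[π, X]]`, acting as before on `π` and trivially on `X`. -/
def gamma2 (c : ℤ_[p]) : PS2 p → PS2 p := fun F =>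
  PowerSeries.mk fun n => gammaQ p c (PowerSeries.coeff n F)

/-- A two-variable power series has all its coefficients in `ℤ_p`,
i.e. lies in `ℤ_p[[π, X]]`. -/
def IntSeries2 (F : PS2 p) : Prop :=
  ∀ n j, ‖PowerSeries.coeff j (PowerSeries.coeff n F)‖ ≤ 1

/-- The element `π` of `ℚ_p[[π, X]]`. -/
def piVar : PS2 p := PowerSeries.C PowerSeries.X

/-- The matrix `P(X)` with rows `(0, -1)` and `(q^{k-1}, X·z)`. -/
def Pmat (k : ℕ) (q z : PowerSeries ℚ_[p]) : Matrix (Fin 2) (Fin 2) (PS2 p) :=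
  !![0, -1;
     PowerSeries.C (q ^ (k - 1)),
       PowerSeries.X * PowerSeries.C z]

/-- A matrix has entries in `ℤ_p[[π, X]]`. -/
def IntMat (H : Matrix (Fin 2) (Fin 2) (PS2 p)) : Prop := ∀ i j, IntSeries2 p (H i j)

/-- A matrix is `≡ Id mod π`, i.e. `H - Id ∈ π · M₂(ℤ_p[[π, X]])`. -/
def ModPiId (H : Matrix (Fin 2) (Fin 2) (PS2 p)) : Prop :=
  ∃ H' : Matrix (Fin 2) (Fin 2) (PS2 p), IntMat p H' ∧ H = 1 + piVar p • H'

/-- The conditions satisfied by the matrix `G_c(X)`: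
entries in `ℤ_p[[π,X]]`, `G ≡ Id mod π`, and `P(X)·φ(G) = G·γ_c(P(X))`. -/
def IsGmat (k : ℕ) (q z : PowerSeries ℚ_[p]) (c : ℤ_[p])
    (G : Matrix (Fin 2) (Fin 2) (PS2 p)) : Prop :=
  IntMat p G ∧ ModPiId p G ∧
    Pmat p k q z * G.map (phi2 p) = G * (Pmat p k q z).map (gamma2 p c)

/-- The matrix `P₀` with rows `(0, -1)` and `(p^{k-1}, p^m X)`, `m = ⌊(k-2)/(p-1)⌋`. -/
def P0mat (k : ℕ) : Matrix (Fin 2) (Fin 2) (PowerSeries ℤ_[p]) :=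
  !![0, -1;
     (p : PowerSeries ℤ_[p]) ^ (k - 1),
       (p : PowerSeries ℤ_[p]) ^ ((k - 2) / (p - 1)) * PowerSeries.X]

section Efield

variable (E : Type*) [NormedField E] [NormedAlgebra ℚ_[p] E] [IsUltrametricDist E]

/-- The ring of integers `O_E` of `E`: the elements of norm at most `1`. -/
def ringOfInt : Subring E where
  carrier := {x : E | ‖x‖ ≤ 1}
  zero_mem' := by simp
  one_mem' := by simp
  add_mem' {a b} ha hb := le_trans (IsUltrametricDist.norm_add_le_max a b) (max_le ha hb)
  neg_mem' {a} ha := by simpa using ha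
  mul_mem' {a b} ha hb := by
    have h := norm_mul a b
    simp only [Set.mem_setOf_eq] at *
    nlinarith [norm_nonneg a, norm_nonneg b]

/-- Evaluation `ev_α : ℚ_p[[π, X]] → E[[π]]` substituting `α` for `X`. -/
def evalX (α : E) (F : PS2 p) : PowerSeries E :=
  PowerSeries.mk fun j =>
    ∑' n : ℕ, algebraMap ℚ_[p] E
      (PowerSeries.coeff j (PowerSeries.coeff n F)) * α ^ n

/-- `γ_c` on `E[[π]]`: substitution of `(1+π)^c - 1` for `π` (coefficients mapped to `E`). -/
def gammaE (c : ℤ_[p]) : PowerSeries E → PowerSeries E :=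
  psSubst ((onePlusPiPow p c).map (algebraMap ℚ_[p] E) - 1)

end Efield

end

/-!
Since `φ` is substitution of `(1 + π)^p - 1 = π q`, it is a ring endomorphism with
`φ(π^i z) = π^i q^i φ(z)`, which gives one implication. For the other, induct on `i`: writing
`y = y₀ + π y'`, we get `φ(y) = y₀ + q π φ(y')`, so `q ∣ φ(y)` forces `q ∣ y₀`. But
`q ≡ π^(p-1) mod p` is a distinguished polynomial, and comparing coefficients in `q h = y₀` puts
every coefficient of `h` in `⋂ₖ pᵏ O_E = 0`; hence `y₀ = 0`. Cancelling `q`, and then `π`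
(as `q(0) = p ≠ 0`), reduces `i + 1` to `i`.
-/

namespace PowerSeries

variable {R : Type*} [CommRing R]

theorem psSubst_eq_subst {g : R⟦X⟧} (hg : constantCoeff g = 0) (f : R⟦X⟧) :
    psSubst g f = f.subst g := by
  ext j
  rw [coeff_subst' (HasSubst.of_constantCoeff_zero' hg), psSubst, coeff_mk,
    finsum_eq_sum_of_support_subset (s := range (j + 1))]
  · simp only [smul_eq_mul]
  · intro d hd
    rw [Function.mem_support] at hd
    rw [coe_range, Set.mem_Iio]
    by_contra! hjd
    exact hd (by rw [X_pow_dvd_iff.mp (pow_dvd_pow_of_dvd (X_dvd_iff.mpr hg) d) j hjd, smul_zero])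

/-- If `f` is a distinguished polynomial of degree `n` and `f * h` is constant, the recursion for
the coefficients of `h` puts them in every power of `I`. -/
theorem eq_zero_of_dvd_C {I : Ideal R} [IsHausdorff I R] {f : R⟦X⟧} {n : ℕ} (hn : 0 < n)
    (hlow : ∀ a < n, coeff a f ∈ I) (hlead : coeff n f = 1) (hhigh : ∀ a, n < a → coeff a f = 0)
    {c : R} (hc : f ∣ C c) : c = 0 := by
  obtain ⟨h, hfh⟩ := hc
  have hrec : ∀ m, coeff m h = -∑ a ∈ range n, coeff a f * coeff (m + n - a) h := by
    intro m
    have hcoeff : coeff (m + n) (f * h) = 0 := by rw [← hfh, coeff_C, if_neg (by omega)]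
    rw [coeff_mul, Nat.sum_antidiagonal_eq_sum_range_succ fun a b => coeff a f * coeff b h,
      ← sum_range_add_sum_Ico _ (by omega : n + 1 ≤ m + n + 1),
      sum_eq_zero (s := Ico _ _) fun a ha => by rw [hhigh a (mem_Ico.mp ha).1, zero_mul],
      add_zero, sum_range_succ, hlead, one_mul, Nat.add_sub_cancel] at hcoeff
    exact eq_neg_of_add_eq_zero_right hcoeff
  have hmem : ∀ k m, coeff m h ∈ I ^ k := by
    intro k
    induction k with
    | zero => simp
    | succ k ih =>
      intro m
      rw [hrec m, pow_succ']
      exact neg_mem (sum_mem fun a ha => Ideal.mul_mem_mul (hlow a (mem_range.mp ha)) (ih _))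
  have hzero : h = 0 := by
    ext m
    exact IsHausdorff.haus ‹_› _ fun k => SModEq.zero.mpr (by simpa using hmem k m)
  simpa [hzero] using congrArg constantCoeff hfh

theorem dvd_of_dvd_X_mul [IsDomain R] {a f : R⟦X⟧} (ha : constantCoeff a ≠ 0) (h : a ∣ X * f) :
    a ∣ f := by
  obtain ⟨v, hv⟩ := h
  have hXv : X ∣ v :=
    (X_prime.dvd_or_dvd ⟨f, hv.symm⟩).resolve_left fun hXa => ha (X_dvd_iff.mp hXa)
  obtain ⟨v', rfl⟩ := hXv
  exact ⟨v', mul_left_cancel₀ X_ne_zero (by rw [hv]; ring)⟩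

theorem pow_dvd_subst_X_mul_iff [IsDomain R] {q : R⟦X⟧} (hq0 : constantCoeff q ≠ 0)
    (hqC : ∀ c, q ∣ C c → c = 0) (n : ℕ) (f : R⟦X⟧) :
    q ^ n ∣ f.subst (X * q) ↔ X ^ n ∣ f := by
  have hsubst : HasSubst (X * q) := HasSubst.of_constantCoeff_zero' (by simp)
  have hX : (X : R⟦X⟧).subst (X * q) = X * q := subst_X hsubst
  have hq_ne : q ≠ 0 := fun h => hq0 (by rw [h, map_zero])
  constructor
  · induction n generalizing f with
    | zero => simp
    | succ n ih =>
      intro hdvd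
      obtain ⟨f', hf'⟩ : X ∣ f - C (constantCoeff f) := X_dvd_iff.mpr (by simp)
      have hf : f = C (constantCoeff f) + X * f' := by rw [← hf']; ring
      have hsf : f.subst (X * q) = C (constantCoeff f) + q * (X * f'.subst (X * q)) := by
        conv_lhs => rw [hf]
        rw [subst_add hsubst, subst_mul hsubst, subst_C, hX]
        show C _ + _ = _
        ring
      have hc : constantCoeff f = 0 := by
        have hqf : q ∣ f.subst (X * q) := (dvd_pow_self q n.succ_ne_zero).trans hdvd
        rw [hsf, dvd_add_left (dvd_mul_right q _)] at hqf
        exact hqC _ hqf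
      rw [hsf, hc, map_zero, zero_add, pow_succ', mul_dvd_mul_iff_left hq_ne] at hdvd
      obtain ⟨u, rfl⟩ := ih f' (dvd_of_dvd_X_mul (by simpa using pow_ne_zero n hq0) hdvd)
      exact ⟨u, by rw [hf, hc, map_zero, zero_add, pow_succ']; ring⟩
  · rintro ⟨z, rfl⟩
    rw [subst_mul hsubst, subst_pow hsubst, hX, mul_pow]
    exact dvd_mul_of_dvd_left (dvd_mul_left _ _) _

end PowerSeries

open PowerSeries

theorem coeff_of_X_mul_eq_one_add_X_pow_sub_one {R : Type*} [CommRing R] {n : ℕ} {q : R⟦X⟧}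
    (hq : X * q = (1 + X) ^ n - 1) (j : ℕ) : coeff j q = (n.choose (j + 1) : R) := by
  have hcoeff := congrArg (coeff (j + 1)) hq
  rwa [coeff_succ_X_mul, map_sub, ← Polynomial.coe_X, ← Polynomial.coe_one, ← Polynomial.coe_add,
    ← Polynomial.coe_pow, Polynomial.coeff_coe, Polynomial.coeff_one_add_X_pow,
    Polynomial.coe_one, coeff_one, if_neg j.succ_ne_zero, sub_zero] at hcoeff

section RingOfInt

variable {E : Type*} [NormedField E] [IsUltrametricDist E]

theorem isHausdorff_span_ringOfInt {r : ringOfInt E} (hr : ‖(r : E)‖ < 1) :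
    IsHausdorff (Ideal.span {r}) (ringOfInt E) := by
  refine ⟨fun x hx => ?_⟩
  have hle : ∀ k, ‖(x : E)‖ ≤ ‖(r : E)‖ ^ k := by
    intro k
    obtain ⟨y, hy⟩ := Ideal.mem_span_singleton'.mp
      (by simpa [Ideal.span_singleton_pow] using SModEq.zero.mp (hx k))
    rw [← hy, Subring.coe_mul, norm_mul, SubmonoidClass.coe_pow, norm_pow]
    exact mul_le_of_le_one_left (by positivity) y.2
  exact Subtype.ext (norm_le_zero_iff.mp
    (ge_of_tendsto' (tendsto_pow_atTop_nhds_zero_of_lt_one (norm_nonneg _) hr) hle))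

variable {p : ℕ} [Fact p.Prime] [NormedAlgebra ℚ_[p] E]

theorem norm_natCast_ringOfInt : ‖((p : ringOfInt E) : E)‖ = (p : ℝ)⁻¹ := by
  rw [SubringClass.coe_natCast, ← map_natCast (algebraMap ℚ_[p] E), norm_algebraMap',
    Padic.norm_p]

theorem natCast_ringOfInt_ne_zero : (p : ringOfInt E) ≠ 0 := by
  intro h
  have hnorm : ‖((p : ringOfInt E) : E)‖ = (p : ℝ)⁻¹ := norm_natCast_ringOfInt
  rw [h, ZeroMemClass.coe_zero, norm_zero] at hnorm
  exact inv_ne_zero (Nat.cast_ne_zero.mpr (Fact.out : p.Prime).ne_zero) hnorm.symm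

theorem eq_zero_of_dvd_C_of_X_mul_eq {q : (ringOfInt E)⟦X⟧} (hq : X * q = (1 + X) ^ p - 1)
    {c : ringOfInt E} (hc : q ∣ C c) : c = 0 := by
  have hp := (Fact.out : p.Prime)
  have hp2 := hp.two_le
  have : IsHausdorff (Ideal.span {(p : ringOfInt E)}) (ringOfInt E) :=
    isHausdorff_span_ringOfInt (norm_natCast_ringOfInt.trans_lt
      (inv_lt_one_of_one_lt₀ (by exact_mod_cast hp.one_lt)))
  refine eq_zero_of_dvd_C (I := Ideal.span {(p : ringOfInt E)}) (n := p - 1) (by omega)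
    (fun a ha => ?_) ?_ (fun a ha => ?_) hc <;> rw [coeff_of_X_mul_eq_one_add_X_pow_sub_one hq]
  · obtain ⟨t, ht⟩ := hp.dvd_choose_self a.succ_ne_zero (by omega)
    exact Ideal.mem_span_singleton.mpr ⟨t, by rw [ht, Nat.cast_mul]⟩
  · rw [Nat.sub_add_cancel hp.one_le, Nat.choose_self, Nat.cast_one]
  · rw [Nat.choose_eq_zero_of_lt (by omega), Nat.cast_zero]

end RingOfInt

theorem statement16_general (p : ℕ) [Fact p.Prime]
    (E : Type*) [NormedField E] [NormedAlgebra ℚ_[p] E]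
    [IsUltrametricDist E]
    (q : PowerSeries (ringOfInt E)) (hq : PowerSeries.X * q = (1 + PowerSeries.X) ^ p - 1)
    (y : PowerSeries (ringOfInt E)) (i : ℕ) :
    q ^ i ∣ phiA p (ringOfInt E) y ↔ PowerSeries.X ^ i ∣ y := by
  have hq0 : constantCoeff q ≠ 0 := by
    rw [← coeff_zero_eq_constantCoeff_apply, coeff_of_X_mul_eq_one_add_X_pow_sub_one hq,
      Nat.choose_one_right]
    exact natCast_ringOfInt_ne_zero
  rw [phiA, psSubst_eq_subst (by simp), ← hq]
  exact pow_dvd_subst_X_mul_iff hq0 (fun c => eq_zero_of_dvd_C_of_X_mul_eq hq) i y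

theorem statement16 (p : ℕ) [Fact p.Prime]
    (E : Type*) [NormedField E] [NormedAlgebra ℚ_[p] E]
    [FiniteDimensional ℚ_[p] E] [IsUltrametricDist E]
    (q : PowerSeries (ringOfInt E)) (hq : PowerSeries.X * q = (1 + PowerSeries.X) ^ p - 1)
    (y : PowerSeries (ringOfInt E)) (i : ℕ) :
    q ^ i ∣ phiA p (ringOfInt E) y ↔ PowerSeries.X ^ i ∣ y :=
  statement16_general p E q hq y i
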